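/- Let C be an (n,2) code whose columns all lie in {[0001],[0011],[0101],[0110]} (transposed), with |1| = 1 (exactly one column of type [0001]) and with |3|, |5|, |6| of the same parity where |3| ≤ |5| ≤ |6| (Class-I with |1| = 1). Let C' be obtained by replacing the unique [0001] column with a [0011] column. Then λ_{C'} ≥ λ_C for every BSC crossover probability ε ∈ (0,1/2), and C' is linear. -/

import Mathlib

/-!
Group the coordinates by the type of their column. The distance from a word `y` to each
codeword then depends only on the profile of `y` (its number of ones in each group), and the
number of words with a given profile is a product of binomial coefficients. Since
`(1 - ε) ^ (n - d) * ε ^ d` decreases in `d` for `ε ≤ 1/2`, it suffices that for every `t` at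
least as many words lie within distance `t` of `C'` as of `C`. The two codes differ only in the
third codeword at the `[0001]ᵀ` coordinate, and profiles within distance `t` of `C` but not of
`C'` are matched injectively with profiles in the opposite situation, without losing words:
either the bit at that coordinate is switched on, or the weights on the `[0011]ᵀ` and `[0110]ᵀ`
groups are exchanged; the latter needs `|6| = |3| + 2δ` and a log-concavity inequality for
binomial coefficients. `C'` is linear because its codewords are `0, a, b, a + b`.
-/

open Finset

/-- Minimum Hamming distance from `y` to the 4 rows (codewords) of `C`. -/
def dmin {m : ℕ} (C : Fin 4 → Fin m → ZMod 2) (y : Fin m → ZMod 2) : ℕ :=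
  Finset.univ.inf' ⟨0, Finset.mem_univ 0⟩ (fun i => hammingDist (C i) y)

/-- Number of outputs at min-distance `d` from the code `C`. -/
def alpha {m : ℕ} (C : Fin 4 → Fin m → ZMod 2) (d : ℕ) : ℕ :=
  (Finset.univ.filter (fun y : Fin m → ZMod 2 => dmin C y = d)).card

/-- Average ML correct decoding probability of `C` on a BSC with crossover `ε`. -/
noncomputable def lam {m : ℕ} (C : Fin 4 → Fin m → ZMod 2) (ε : ℝ) : ℝ :=
  (1/4) * ∑ d ∈ Finset.range (m+1), (alpha C d : ℝ) * (1-ε)^(m-d) * ε^d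

/-- The column pattern (in `{0,1}^4`) associated with the integer `i`,
row 1 being the most significant bit. -/
def pat (i : ℕ) : Fin 4 → ZMod 2 := fun j => if Nat.testBit i (3 - (j : ℕ)) then 1 else 0

/-- Number of columns of `C` equal to the pattern `p`. -/
def colCount {m : ℕ} (C : Fin 4 → Fin m → ZMod 2) (p : Fin 4 → ZMod 2) : ℕ :=
  (Finset.univ.filter (fun k : Fin m => (fun i => C i k) = p)).card

/-- A code is linear if its set of codewords is a subgroup of `({0,1}^n, ⊕)`. -/
def IsLinearCode {m : ℕ} (C : Fin 4 → Fin m → ZMod 2) : Prop :=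
  ∃ H : AddSubgroup (Fin m → ZMod 2), Set.range C = (H : Set (Fin m → ZMod 2))

/-- `w_i(y)`: number of positions with column pattern `i` where `y` is 1. -/
def wcount {m : ℕ} (C : Fin 4 → Fin m → ZMod 2) (i : ℕ) (y : Fin m → ZMod 2) : ℕ :=
  (Finset.univ.filter (fun k : Fin m => (fun r => C r k) = pat i ∧ y k = 1)).card

namespace Nat

theorem choose_mul_choose_le_of_two_mul_lt {a k : ℕ} (δ : ℕ) (hk : 2 * k < a) :
    a.choose k * (a + 2 * δ).choose (k + 1 + δ)
      ≤ a.choose (k + 1) * (a + 2 * δ).choose (k + δ) := by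
  have h₁ := choose_succ_right_eq a k
  have h₂ := choose_succ_right_eq (a + 2 * δ) (k + δ)
  rw [show k + δ + 1 = k + 1 + δ by ring, show a + 2 * δ - (k + δ) = a - k + δ by omega] at h₂
  have key : (a - k + δ) * (k + 1) ≤ (a - k) * (k + 1 + δ) := by
    have : k + 1 ≤ a - k := by omega
    nlinarith
  refine le_of_mul_le_mul_right ?_ (show 0 < (k + 1) * (k + 1 + δ) by positivity)
  calc a.choose k * (a + 2 * δ).choose (k + 1 + δ) * ((k + 1) * (k + 1 + δ))
      = a.choose k * ((a + 2 * δ).choose (k + 1 + δ) * (k + 1 + δ)) * (k + 1) := by ring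
    _ = a.choose k * (a + 2 * δ).choose (k + δ) * ((a - k + δ) * (k + 1)) := by rw [h₂]; ring
    _ ≤ a.choose k * (a + 2 * δ).choose (k + δ) * ((a - k) * (k + 1 + δ)) := by gcongr
    _ = (a.choose k * (a - k)) * (a + 2 * δ).choose (k + δ) * (k + 1 + δ) := by ring
    _ = a.choose (k + 1) * (a + 2 * δ).choose (k + δ) * ((k + 1) * (k + 1 + δ)) := by
        rw [← h₁]; ring

theorem monotoneOn_choose_div_choose (a δ : ℕ) :
    MonotoneOn (fun k => (a.choose k : ℚ) / (a + 2 * δ).choose (k + δ)) (Set.Iic (a / 2)) := by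
  refine monotoneOn_of_le_add_one Set.ordConnected_Iic fun k _ _ hk => ?_
  have hk : 2 * k < a := by simp only [Set.mem_Iic] at hk; omega
  rw [div_le_div_iff₀ (by exact_mod_cast choose_pos (by omega))
    (by exact_mod_cast choose_pos (by omega))]
  exact_mod_cast choose_mul_choose_le_of_two_mul_lt δ hk

/-- The ratio `choose a k / choose (a + 2δ) (k + δ)` is symmetric under `k ↦ a - k` and
increasing on `k ≤ a / 2`, so it is smaller at `u` than at any `p` with `u ≤ min p (a - p)`. -/
theorem choose_mul_choose_le_choose_mul_choose {a u p : ℕ} (δ : ℕ) (hup : u ≤ p)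
    (hpa : u + p ≤ a) :
    a.choose u * (a + 2 * δ).choose (p + δ) ≤ a.choose p * (a + 2 * δ).choose (u + δ) := by
  obtain ⟨q, huq, hqa, hfq⟩ : ∃ q, u ≤ q ∧ 2 * q ≤ a ∧
      (a.choose q : ℚ) / (a + 2 * δ).choose (q + δ) = a.choose p / (a + 2 * δ).choose (p + δ) := by
    rcases le_total (2 * p) a with h | h
    · exact ⟨p, hup, h, rfl⟩
    · refine ⟨a - p, by omega, by omega, ?_⟩
      rw [choose_symm (by omega), show a - p + δ = a + 2 * δ - (p + δ) by omega,
        choose_symm (by omega)]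
  have hmono : (a.choose u : ℚ) / (a + 2 * δ).choose (u + δ)
      ≤ a.choose q / (a + 2 * δ).choose (q + δ) :=
    monotoneOn_choose_div_choose a δ (show u ∈ Set.Iic (a / 2) by simp; omega)
      (show q ∈ Set.Iic (a / 2) by simp; omega) huq
  rw [hfq, div_le_div_iff₀ (by exact_mod_cast choose_pos (by omega))
    (by exact_mod_cast choose_pos (by omega))] at hmono
  exact_mod_cast hmono

end Nat

theorem ZMod.eq_zero_or_eq_one_mod_two (x : ZMod 2) : x = 0 ∨ x = 1 := by
  revert x; decide

theorem isLinearCode_of_rows {m : ℕ} (C : Fin 4 → Fin m → ZMod 2) (h0 : C 0 = 0)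
    (h3 : C 3 = C 1 + C 2) : IsLinearCode C := by
  refine ⟨(Submodule.span (ZMod 2) {C 1, C 2}).toAddSubgroup, ?_⟩
  ext x
  simp only [Set.mem_range, Submodule.coe_toAddSubgroup, SetLike.mem_coe, Submodule.mem_span_pair]
  constructor
  · rintro ⟨i, rfl⟩
    fin_cases i
    · exact ⟨0, 0, by simp [h0]⟩
    · exact ⟨1, 0, by simp⟩
    · exact ⟨0, 1, by simp⟩
    · exact ⟨1, 1, by simp [h3]⟩
  · rintro ⟨a, b, rfl⟩
    rcases ZMod.eq_zero_or_eq_one_mod_two a with rfl | rfl <;>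
      rcases ZMod.eq_zero_or_eq_one_mod_two b with rfl | rfl
    · exact ⟨0, by simp [h0]⟩
    · exact ⟨2, by simp⟩
    · exact ⟨1, by simp⟩
    · exact ⟨3, by simp [h3]⟩

theorem card_filter_le_card_filter_of_injOn {X M : Type*} [Fintype X] [DecidableEq M]
    (π : X → M) (P Q : M → Prop) [DecidablePred P] [DecidablePred Q] (T : M → M)
    (hT : ∀ m ∈ Set.range π, P m → ¬ Q m → Q (T m) ∧ ¬ P (T m))
    (hinj : Set.InjOn T {m | m ∈ Set.range π ∧ P m ∧ ¬ Q m})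
    (hcard : ∀ m ∈ Set.range π, P m → ¬ Q m → #{x | π x = m} ≤ #{x | π x = T m}) :
    #{x | P (π x)} ≤ #{x | Q (π x)} := by
  suffices h : #{x | P (π x) ∧ ¬ Q (π x)} ≤ #{x | Q (π x) ∧ ¬ P (π x)} by
    classical
    rw [← card_sdiff_le_card_sdiff_iff]
    convert h using 2 <;> ext <;> simp
  set S := image π {x | P (π x) ∧ ¬ Q (π x)}
  have hS : ∀ m ∈ S, m ∈ Set.range π ∧ P m ∧ ¬ Q m := by
    simp only [S, mem_image, mem_filter, mem_univ, true_and]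
    rintro _ ⟨x, hx, rfl⟩
    exact ⟨⟨x, rfl⟩, hx⟩
  calc #{x | P (π x) ∧ ¬ Q (π x)}
      = ∑ m ∈ S, #{x ∈ {x | P (π x) ∧ ¬ Q (π x)} | π x = m} := card_eq_sum_card_image _ _
    _ ≤ ∑ m ∈ S, #{x | π x = T m} := sum_le_sum fun m hm =>
        (card_le_card (filter_subset_filter _ (filter_subset _ _))).trans
          (hcard m (hS m hm).1 (hS m hm).2.1 (hS m hm).2.2)
    _ = ∑ m ∈ S.image T, #{x | π x = m} :=
        (sum_image (f := fun m => #{x | π x = m}) fun m hm m' hm' =>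
          hinj (hS m hm) (hS m' hm')).symm
    _ = #{x | π x ∈ S.image T} := sum_card_fiberwise_eq_card_filter _ _ _
    _ ≤ #{x | Q (π x) ∧ ¬ P (π x)} := by
        refine card_le_card (monotone_filter_right _ fun x _ hx => ?_)
        obtain ⟨m, hm, hmx⟩ := mem_image.1 hx
        rw [← hmx]
        exact hT m (hS m hm).1 (hS m hm).2.1 (hS m hm).2.2

theorem apply_eq_add_sum_ite_sub (f : ℕ → ℝ) {k N : ℕ} (hk : k ≤ N) :
    f k = f N + ∑ t ∈ range N, if k ≤ t then f t - f (t + 1) else 0 := by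
  induction N, hk using Nat.le_induction with
  | base => rw [sum_eq_zero fun t ht => if_neg (not_le.2 (mem_range.1 ht)), add_zero]
  | succ N hkN ih => rw [sum_range_succ, if_pos hkN, ih]; ring

theorem sum_comp_le_sum_comp_of_card_le {X : Type*} [Fintype X] {f : ℕ → ℝ} (hf : Antitone f)
    (u v : X → ℕ) (h : ∀ t, #{x | u x ≤ t} ≤ #{x | v x ≤ t}) :
    ∑ x, f (u x) ≤ ∑ x, f (v x) := by
  set N := univ.sup u ⊔ univ.sup v
  have layer : ∀ w : X → ℕ, (∀ x, w x ≤ N) → ∑ x, f (w x)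
      = Fintype.card X * f N + ∑ t ∈ range N, #{x | w x ≤ t} * (f t - f (t + 1)) := by
    intro w hw
    simp_rw [fun x => apply_eq_add_sum_ite_sub f (hw x), sum_add_distrib, sum_const, card_univ,
      nsmul_eq_mul, sum_comm (s := univ), ← sum_filter, sum_const, nsmul_eq_mul]
  rw [layer u fun x => le_sup_of_le_left (le_sup (mem_univ x)),
    layer v fun x => le_sup_of_le_right (le_sup (mem_univ x))]
  refine add_le_add_right (sum_le_sum fun t _ => mul_le_mul_of_nonneg_right ?_ ?_) _
  · exact_mod_cast h t
  · exact sub_nonneg.2 (hf t.le_succ)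

theorem antitone_one_sub_pow_mul_pow {ε : ℝ} (m : ℕ) (h0 : 0 ≤ ε) (h1 : ε ≤ 1 / 2) :
    Antitone fun d => (1 - ε) ^ (m - d) * ε ^ d := by
  refine antitone_nat_of_succ_le fun d => ?_
  rcases lt_or_ge d m with h | h
  · rw [show m - d = m - (d + 1) + 1 by omega, pow_succ, pow_succ]
    have : 0 ≤ (1 - ε) ^ (m - (d + 1)) * ε ^ d := by bound
    nlinarith
  · rw [Nat.sub_eq_zero_of_le h, Nat.sub_eq_zero_of_le (by omega), pow_succ]
    have : 0 ≤ ε ^ d := by bound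
    nlinarith

theorem dmin_le_length {m : ℕ} (C : Fin 4 → Fin m → ZMod 2) (y : Fin m → ZMod 2) : dmin C y ≤ m :=
  (inf'_le _ (mem_univ 0)).trans (hammingDist_le_card_fintype.trans (Fintype.card_fin m).le)

theorem lam_eq_sum {m : ℕ} (C : Fin 4 → Fin m → ZMod 2) (ε : ℝ) :
    lam C ε = 1 / 4 * ∑ y, (1 - ε) ^ (m - dmin C y) * ε ^ dmin C y := by
  rw [lam, ← sum_fiberwise_of_maps_to (g := dmin C) (t := range (m + 1))
    fun y _ => mem_range.2 (Nat.lt_succ_of_le (dmin_le_length C y))]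
  congr 1
  refine sum_congr rfl fun d _ => ?_
  rw [sum_congr rfl fun y hy => by rw [(mem_filter.1 hy).2], sum_const, nsmul_eq_mul, alpha]
  ring

theorem lam_le_lam_of_card_dmin_le {m : ℕ} {C C' : Fin 4 → Fin m → ZMod 2}
    (h : ∀ t, #{y | dmin C y ≤ t} ≤ #{y | dmin C' y ≤ t}) {ε : ℝ} (h0 : 0 ≤ ε) (h1 : ε ≤ 1 / 2) :
    lam C ε ≤ lam C' ε := by
  rw [lam_eq_sum, lam_eq_sum]
  gcongr 1 / 4 * ?_
  exact sum_comp_le_sum_comp_of_card_le (antitone_one_sub_pow_mul_pow m h0 h1) _ _ h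

section GroupedCode

variable {ι K ρ : Type*} [DecidableEq K]

def groupCode (V : K → ρ → ZMod 2) (g : ι → K) : ρ → ι → ZMod 2 := fun r k => V (g k) r

def groupSize [Fintype ι] (g : ι → K) (i : K) : ℕ := #{k | g k = i}

def profile [Fintype ι] (g : ι → K) (y : ι → ZMod 2) (i : K) : ℕ := #{k | g k = i ∧ y k = 1}

def profileDist [Fintype K] (V : K → ρ → ZMod 2) (s m : K → ℕ) (r : ρ) : ℕ :=
  ∑ i, if V i r = 0 then m i else s i - m i

theorem profile_le_groupSize [Fintype ι] (g : ι → K) (y : ι → ZMod 2) : profile g y ≤ groupSize g :=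
  fun _ => card_le_card (monotone_filter_right _ fun _ _ h => h.1)

theorem card_fiber_filter_ne_eq [Fintype ι] (g : ι → K) (v : ZMod 2) (y : ι → ZMod 2) (i : K) :
    #{k | g k = i ∧ v ≠ y k} = if v = 0 then profile g y i else groupSize g i - profile g y i := by
  classical
  rcases ZMod.eq_zero_or_eq_one_mod_two v with rfl | rfl
  · simp only [if_true, profile]
    congr 1; ext k
    rcases ZMod.eq_zero_or_eq_one_mod_two (y k) with h | h <;> simp [h]
  · simp only [one_ne_zero, if_false, profile, groupSize]
    rw [← card_sdiff_of_subset (monotone_filter_right _ fun _ _ h => h.1)]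
    congr 1; ext k
    rcases ZMod.eq_zero_or_eq_one_mod_two (y k) with h | h <;> simp [h]

theorem hammingDist_groupCode [Fintype ι] [Fintype K] (V : K → ρ → ZMod 2) (g : ι → K) (r : ρ)
    (y : ι → ZMod 2) :
    hammingDist (groupCode V g r) y = profileDist V (groupSize g) (profile g y) r := by
  rw [hammingDist, card_eq_sum_card_fiberwise (f := g) (t := univ) fun _ _ => mem_univ _]
  refine sum_congr rfl fun i _ => ?_
  rw [filter_filter, ← card_fiber_filter_ne_eq g (V i r) y i]
  congr 1
  exact filter_congr fun k _ =>
    ⟨fun ⟨h, hk⟩ => ⟨hk, hk ▸ h⟩, fun ⟨hk, h⟩ => ⟨by rwa [groupCode, hk], hk⟩⟩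

theorem dmin_groupCode_le_iff [Fintype K] {n : ℕ} (V : K → Fin 4 → ZMod 2) (g : Fin n → K)
    (y : Fin n → ZMod 2) (t : ℕ) :
    dmin (groupCode V g) y ≤ t ↔ ∃ r, profileDist V (groupSize g) (profile g y) r ≤ t := by
  change univ.inf' univ_nonempty (fun r => hammingDist (groupCode V g r) y) ≤ t ↔ _
  simp only [Finset.inf'_le_iff, mem_univ, true_and, hammingDist_groupCode]

theorem filter_mem_fiber_eq [Fintype ι] [DecidableEq ι] (g : ι → K) {F : K → Finset ι}
    (hF : ∀ i, F i ⊆ ({k | g k = i} : Finset ι)) (i : K) :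
    ({k | g k = i ∧ k ∈ F (g k)} : Finset ι) = F i := by
  ext k
  simp only [mem_filter, mem_univ, true_and]
  refine ⟨fun ⟨hk, hkF⟩ => hk ▸ hkF, fun hkF => ?_⟩
  have hk : g k = i := by simpa using hF i hkF
  exact ⟨hk, hk ▸ hkF⟩

theorem card_profile_eq [Fintype ι] [Fintype K] [DecidableEq ι] (g : ι → K) (m : K → ℕ) :
    #{y : ι → ZMod 2 | profile g y = m} = ∏ i, (groupSize g i).choose (m i) := by
  simp_rw [groupSize, ← card_powersetCard, ← Fintype.card_piFinset]
  refine card_bij' (fun y _ i => {k | g k = i ∧ y k = 1})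
    (fun F _ k => if k ∈ F (g k) then 1 else 0) ?_ ?_ ?_ ?_
  · intro y hy
    simp only [mem_filter, mem_univ, true_and] at hy
    simp only [Fintype.mem_piFinset, mem_powersetCard]
    exact fun i => ⟨monotone_filter_right _ fun _ _ h => h.1, congrFun hy i⟩
  · intro F hF
    simp only [Fintype.mem_piFinset, mem_powersetCard] at hF
    simp only [mem_filter, mem_univ, true_and]
    funext i
    rw [profile, ← (hF i).2, ← filter_mem_fiber_eq g (fun i => (hF i).1) i]
    simp
  · intro y _
    funext k
    rcases ZMod.eq_zero_or_eq_one_mod_two (y k) with h | h <;> simp [h]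
  · intro F hF
    simp only [Fintype.mem_piFinset, mem_powersetCard] at hF
    funext i
    simpa using filter_mem_fiber_eq g (fun i => (hF i).1) i

theorem groupCode_update [DecidableEq ι] (V : K → ρ → ZMod 2) (g : ι → K) {i₀ : K} {j₀ : ι}
    (h : ∀ k, g k = i₀ ↔ k = j₀) (v : ρ → ZMod 2) :
    (fun r k => if k = j₀ then v r else groupCode V g r k)
      = groupCode (Function.update V i₀ v) g := by
  funext r k
  by_cases hk : k = j₀
  · subst hk
    simp [groupCode, (h k).2 rfl]
  · simp [groupCode, hk, mt (h k).1 hk]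

theorem groupSize_eq_colCount {n : ℕ} {V : K → Fin 4 → ZMod 2}
    (g : Fin n → K) (hV : Function.Injective V) (i : K) :
    groupSize g i = colCount (groupCode V g) (V i) :=
  congrArg card (filter_congr fun _ _ => hV.eq_iff.symm)

end GroupedCode

theorem isLinearCode_groupCode {K : Type*} {n : ℕ} (V : K → Fin 4 → ZMod 2) (g : Fin n → K)
    (h0 : ∀ i, V i 0 = 0) (h3 : ∀ i, V i 3 = V i 1 + V i 2) : IsLinearCode (groupCode V g) :=
  isLinearCode_of_rows _ (funext fun k => h0 (g k)) (funext fun k => h3 (g k))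

def columnTypes : Fin 4 → Fin 4 → ZMod 2 := ![pat 1, pat 3, pat 5, pat 6]

theorem columnTypes_injective : Function.Injective columnTypes := by
  decide

theorem exists_profileDist_columnTypes_le_iff (s m : Fin 4 → ℕ) (t : ℕ) :
    (∃ r, profileDist columnTypes s m r ≤ t) ↔
      m 0 + m 1 + m 2 + m 3 ≤ t ∨ m 0 + m 1 + (s 2 - m 2) + (s 3 - m 3) ≤ t ∨
      m 0 + (s 1 - m 1) + m 2 + (s 3 - m 3) ≤ t ∨
      (s 0 - m 0) + (s 1 - m 1) + (s 2 - m 2) + m 3 ≤ t := by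
  simp +decide [profileDist, Fin.exists_fin_succ, Fin.sum_univ_four, columnTypes, pat]

theorem exists_profileDist_update_columnTypes_le_iff (s m : Fin 4 → ℕ) (t : ℕ) :
    (∃ r, profileDist (Function.update columnTypes 0 (pat 3)) s m r ≤ t) ↔
      m 0 + m 1 + m 2 + m 3 ≤ t ∨ m 0 + m 1 + (s 2 - m 2) + (s 3 - m 3) ≤ t ∨
      (s 0 - m 0) + (s 1 - m 1) + m 2 + (s 3 - m 3) ≤ t ∨
      (s 0 - m 0) + (s 1 - m 1) + (s 2 - m 2) + m 3 ≤ t := by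
  simp +decide [profileDist, Fin.exists_fin_succ, Fin.sum_univ_four, columnTypes, pat]

/-- Sends a profile within distance `t` of `groupCode columnTypes` but not of the modified code
to one in the opposite situation: unless switching on the `[0001]ᵀ` bit already suffices, the
weights on the `[0011]ᵀ` and `[0110]ᵀ` groups, of sizes `s 1` and `s 3 = s 1 + 2δ`, are
exchanged up to the shift `δ`. -/
def profileSwap (δ t : ℕ) (s m : Fin 4 → ℕ) : Fin 4 → ℕ :=
  if t < (s 1 - m 1) + (s 2 - m 2) + m 3 then ![1, m 1, m 2, m 3]
  else ![1, m 3 - δ, m 2, m 1 + δ]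

section ProfileSwap

variable {δ t : ℕ} {s m : Fin 4 → ℕ}

theorem constraints_of_dist_le_of_not_dist_update_le (hs0 : s 0 = 1) (hm : m ≤ s)
    (hP : ∃ r, profileDist columnTypes s m r ≤ t)
    (hQ : ¬ ∃ r, profileDist (Function.update columnTypes 0 (pat 3)) s m r ≤ t) :
    m 0 = 0 ∧ (s 1 - m 1) + m 2 + (s 3 - m 3) = t ∧ t < m 1 + m 2 + m 3 ∧
      t < m 1 + (s 2 - m 2) + (s 3 - m 3) ∧ t ≤ (s 1 - m 1) + (s 2 - m 2) + m 3 := by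
  rw [exists_profileDist_columnTypes_le_iff] at hP
  rw [exists_profileDist_update_columnTypes_le_iff] at hQ
  have : m 0 ≤ s 0 := hm 0
  omega

theorem profileSwap_mem (hs0 : s 0 = 1) (hs3 : s 3 = s 1 + 2 * δ) (hm : m ≤ s)
    (hP : ∃ r, profileDist columnTypes s m r ≤ t)
    (hQ : ¬ ∃ r, profileDist (Function.update columnTypes 0 (pat 3)) s m r ≤ t) :
    (∃ r, profileDist (Function.update columnTypes 0 (pat 3)) s (profileSwap δ t s m) r ≤ t) ∧
      ¬ ∃ r, profileDist columnTypes s (profileSwap δ t s m) r ≤ t := by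
  obtain ⟨-, h₂, h₀, h₁, h₃⟩ := constraints_of_dist_le_of_not_dist_update_le hs0 hm hP hQ
  have : m 1 ≤ s 1 := hm 1
  have : m 2 ≤ s 2 := hm 2
  have : m 3 ≤ s 3 := hm 3
  rw [exists_profileDist_columnTypes_le_iff, exists_profileDist_update_columnTypes_le_iff]
  unfold profileSwap
  split_ifs <;>
    simp only [Matrix.cons_val_zero, Matrix.cons_val_one, Matrix.cons_val, hs0, tsub_self,
      zero_add, not_or, not_le] <;> omega

theorem profileSwap_injOn (hs0 : s 0 = 1) (hs3 : s 3 = s 1 + 2 * δ) :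
    Set.InjOn (profileSwap δ t s) {m | m ≤ s ∧ (∃ r, profileDist columnTypes s m r ≤ t) ∧
      ¬ ∃ r, profileDist (Function.update columnTypes 0 (pat 3)) s m r ≤ t} := by
  rintro m ⟨hm, hP, hQ⟩ m' ⟨hm', hP', hQ'⟩ h
  obtain ⟨h₀, h₂, -, h₁, h₃⟩ := constraints_of_dist_le_of_not_dist_update_le hs0 hm hP hQ
  obtain ⟨h₀', h₂', -, h₁', h₃'⟩ := constraints_of_dist_le_of_not_dist_update_le hs0 hm' hP' hQ'
  have : m 1 ≤ s 1 := hm 1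
  have : m 2 ≤ s 2 := hm 2
  have : m 3 ≤ s 3 := hm 3
  have : m' 1 ≤ s 1 := hm' 1
  have : m' 2 ≤ s 2 := hm' 2
  have : m' 3 ≤ s 3 := hm' 3
  have e₁ := congrFun h 1
  have e₂ := congrFun h 2
  have e₃ := congrFun h 3
  unfold profileSwap at e₁ e₂ e₃
  have : m 1 = m' 1 ∧ m 2 = m' 2 ∧ m 3 = m' 3 := by
    split_ifs at e₁ e₂ e₃ <;>
      simp only [Matrix.cons_val_one, Matrix.cons_val_zero, Matrix.cons_val] at e₁ e₂ e₃ <;> omega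
  funext i
  fin_cases i <;> simp only [Fin.zero_eta, Fin.mk_one, Fin.reduceFinMk] <;> omega

theorem prod_choose_le_prod_choose_profileSwap (hs0 : s 0 = 1) (hs3 : s 3 = s 1 + 2 * δ)
    (hm : m ≤ s) (hP : ∃ r, profileDist columnTypes s m r ≤ t)
    (hQ : ¬ ∃ r, profileDist (Function.update columnTypes 0 (pat 3)) s m r ≤ t) :
    ∏ i, (s i).choose (m i) ≤ ∏ i, (s i).choose (profileSwap δ t s m i) := by
  obtain ⟨h₀, h₂, h₀', h₁, h₃⟩ := constraints_of_dist_le_of_not_dist_update_le hs0 hm hP hQ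
  clear hP hQ
  have hm₁ : m 1 ≤ s 1 := hm 1
  have : m 2 ≤ s 2 := hm 2
  have : m 3 ≤ s 3 := hm 3
  simp only [Fin.prod_univ_four, profileSwap]
  split_ifs with h
  · simp [hs0, h₀]
  · have key := Nat.choose_mul_choose_le_choose_mul_choose (a := s 1) (u := s 1 - m 1)
      (p := m 3 - δ) δ (by omega) (by omega)
    rw [← hs3, Nat.choose_symm hm₁, Nat.sub_add_cancel (by omega : δ ≤ m 3),
      show s 1 - m 1 + δ = s 3 - (m 1 + δ) by omega,
      Nat.choose_symm (show m 1 + δ ≤ s 3 by omega)] at key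
    change _ ≤ (s 0).choose 1 * (s 1).choose (m 3 - δ) * (s 2).choose (m 2) *
      (s 3).choose (m 1 + δ)
    rw [hs0, h₀, Nat.choose_zero_right, Nat.choose_self]
    calc 1 * (s 1).choose (m 1) * (s 2).choose (m 2) * (s 3).choose (m 3)
        = (s 1).choose (m 1) * (s 3).choose (m 3) * (s 2).choose (m 2) := by ring
      _ ≤ (s 1).choose (m 3 - δ) * (s 3).choose (m 1 + δ) * (s 2).choose (m 2) := by gcongr
      _ = _ := by ring

end ProfileSwap

theorem card_dmin_le_card_dmin_update {n : ℕ} (g : Fin n → Fin 4) {δ : ℕ}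
    (hs0 : groupSize g 0 = 1) (hs3 : groupSize g 3 = groupSize g 1 + 2 * δ) (t : ℕ) :
    #{y | dmin (groupCode columnTypes g) y ≤ t}
      ≤ #{y | dmin (groupCode (Function.update columnTypes 0 (pat 3)) g) y ≤ t} := by
  simp_rw [dmin_groupCode_le_iff]
  refine card_filter_le_card_filter_of_injOn (profile g)
    (fun m => ∃ r, profileDist columnTypes (groupSize g) m r ≤ t)
    (fun m => ∃ r, profileDist (Function.update columnTypes 0 (pat 3)) (groupSize g) m r ≤ t)
    (profileSwap δ t (groupSize g)) ?_ ?_ ?_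
  · rintro _ ⟨y, rfl⟩ hP hQ
    exact profileSwap_mem hs0 hs3 (profile_le_groupSize g y) hP hQ
  · refine (profileSwap_injOn hs0 hs3).mono ?_
    rintro _ ⟨⟨y, rfl⟩, hPQ⟩
    exact ⟨profile_le_groupSize g y, hPQ⟩
  · rintro _ ⟨y, rfl⟩ hP hQ
    rw [card_profile_eq, card_profile_eq]
    exact prod_choose_le_prod_choose_profileSwap hs0 hs3 (profile_le_groupSize g y) hP hQ


/-- Theorem 4 of the paper (case `|3| ≤ |5| ≤ |6|`): for a Class-I code with
`|1| = 1`, replacing the unique `[0,0,0,1]ᵀ` column by `[0,0,1,1]ᵀ` does not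
decrease λ, and the resulting code is linear. -/
theorem stmt11 (n : ℕ) (C C' : Fin 4 → Fin n → ZMod 2)
    (hcols : ∀ k : Fin n, (fun i => C i k) = pat 1 ∨ (fun i => C i k) = pat 3 ∨
      (fun i => C i k) = pat 5 ∨ (fun i => C i k) = pat 6)
    (h1 : colCount C (pat 1) = 1)
    (hord35 : colCount C (pat 3) ≤ colCount C (pat 5))
    (hord56 : colCount C (pat 5) ≤ colCount C (pat 6))
    (hpar35 : colCount C (pat 3) % 2 = colCount C (pat 5) % 2)
    (hpar56 : colCount C (pat 5) % 2 = colCount C (pat 6) % 2)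
    (j0 : Fin n) (hj0 : (fun i => C i j0) = pat 1)
    (hC' : C' = fun i j => if j = j0 then pat 3 i else C i j) :
    (∀ ε : ℝ, 0 < ε → ε < 1/2 → lam C ε ≤ lam C' ε) ∧ IsLinearCode C' := by
  choose g hg using fun k => show ∃ i, (fun r => C r k) = columnTypes i by
    rcases hcols k with h | h | h | h
    exacts [⟨0, h⟩, ⟨1, h⟩, ⟨2, h⟩, ⟨3, h⟩]
  have hC : C = groupCode columnTypes g := funext₂ fun r k => congrFun (hg k) r
  have hsize : ∀ i, groupSize g i = colCount C (columnTypes i) := fun i => by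
    rw [hC, groupSize_eq_colCount g columnTypes_injective]
  have hfiber : ∀ k, g k = 0 ↔ k = j0 := by
    have hj : g j0 = 0 := columnTypes_injective ((hg j0).symm.trans hj0)
    have hle : #{k | g k = 0} ≤ 1 := (hsize 0).trans_le h1.le
    exact fun k => ⟨fun hk => card_le_one.1 hle k (by simpa) j0 (by simpa), fun hk => hk ▸ hj⟩
  replace hC' : C' = groupCode (Function.update columnTypes 0 (pat 3)) g := by
    rw [hC', ← groupCode_update columnTypes g hfiber, ← hC]
  obtain ⟨δ, hδ⟩ : ∃ δ, groupSize g 3 = groupSize g 1 + 2 * δ :=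
    ⟨(groupSize g 3 - groupSize g 1) / 2, by simp only [hsize]; dsimp [columnTypes]; omega⟩
  refine ⟨fun ε hε hε' => ?_, ?_⟩
  · rw [hC', hC]
    exact lam_le_lam_of_card_dmin_le (card_dmin_le_card_dmin_update g ((hsize 0).trans h1) hδ)
      hε.le hε'.le
  · rw [hC']
    exact isLinearCode_groupCode _ g (by decide) (by decide)
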